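/- Let (Ω, 𝓕, P) be a probability space, let (𝓕_t)_{t=0}^{n} be a filtration, let A_1, …, A_n be events with A_t ∈ 𝓕_t for each t, and let p₀ ∈ [0, 1] be such that for every t ∈ {1, …, n}, E[1_{A_t} ∣ 𝓕_{t−1}] ≤ p₀ almost surely. Then for every λ ≥ 0, E[ exp( λ · ∑_{t=1}^{n} 1_{A_t} ) ] ≤ (1 − p₀ + p₀·e^{λ})^{n}. -/

import Mathlib

/-!
Write `S_k = ∑_{t ≤ k} 1_{A_t}` and `c = 1 - p₀ + p₀ e^λ`. Since `1_{A}` takes only the values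
`0` and `1`, `e^{λ 1_A} = 1 + (e^λ - 1) 1_A`. As `e^{λ S_k}` is `𝓕_k`-measurable, pulling it out of
the conditional expectation given `𝓕_k` yields `E[e^{λ S_k} 1_{A_{k+1}}] ≤ p₀ E[e^{λ S_k}]`, hence
`E[e^{λ S_{k+1}}] ≤ c E[e^{λ S_k}]`, and induction on `k` gives `E[e^{λ S_n}] ≤ cⁿ`.
-/

open MeasureTheory Finset

lemma Real.exp_mul_indicator_one {Ω : Type*} (B : Set Ω) (l : ℝ) (ω : Ω) :
    Real.exp (l * B.indicator (fun _ => (1 : ℝ)) ω) =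
      1 + (Real.exp l - 1) * B.indicator (fun _ => (1 : ℝ)) ω := by
  by_cases h : ω ∈ B <;> simp [h]

lemma MeasureTheory.Integrable.mul_indicator_one {Ω : Type*} [MeasurableSpace Ω]
    {μ : Measure Ω} {f : Ω → ℝ} (hf : Integrable f μ) {B : Set Ω} (hB : MeasurableSet B) :
    Integrable (fun ω => f ω * B.indicator (fun _ => (1 : ℝ)) ω) μ := by
  refine (hf.indicator hB).congr (.of_forall fun ω => ?_)
  by_cases h : ω ∈ B <;> simp [h]

section OneStep

variable {Ω : Type*} {m m0 : MeasurableSpace Ω} {μ : Measure Ω} [IsFiniteMeasure μ]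
  {f : Ω → ℝ} {B : Set Ω} {p : ℝ}

lemma integral_mul_indicator_le_of_condExp_le (hm : m ≤ m0) (hf : StronglyMeasurable[m] f)
    (hf_nonneg : 0 ≤ f) (hf_int : Integrable f μ) (hB : MeasurableSet B)
    (hB_cond : ∀ᵐ ω ∂μ, μ[B.indicator (fun _ => (1 : ℝ)) | m] ω ≤ p) :
    ∫ ω, f ω * B.indicator (fun _ => (1 : ℝ)) ω ∂μ ≤ p * ∫ ω, f ω ∂μ := by
  set g := B.indicator (fun _ => (1 : ℝ))
  have hg_int : Integrable g μ := (integrable_const 1).indicator hB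
  have hfg_int : Integrable (f * g) μ := hf_int.mul_indicator_one hB
  have hpull : μ[f * g | m] =ᵐ[μ] f * μ[g | m] :=
    condExp_mul_of_stronglyMeasurable_left hf hfg_int hg_int
  calc ∫ ω, (f * g) ω ∂μ = ∫ ω, μ[f * g | m] ω ∂μ := (integral_condExp hm).symm
    _ = ∫ ω, f ω * μ[g | m] ω ∂μ := integral_congr_ae hpull
    _ ≤ ∫ ω, p * f ω ∂μ := by
        refine integral_mono_ae ((integrable_condExp).congr hpull) (hf_int.const_mul p) ?_
        filter_upwards [hB_cond] with ω hω
        rw [mul_comm p]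
        exact mul_le_mul_of_nonneg_left hω (hf_nonneg ω)
    _ = p * ∫ ω, f ω ∂μ := integral_const_mul p f

lemma integral_mul_exp_mul_indicator_le (hm : m ≤ m0) (hf : StronglyMeasurable[m] f)
    (hf_nonneg : 0 ≤ f) (hf_int : Integrable f μ) (hB : MeasurableSet B)
    (hB_cond : ∀ᵐ ω ∂μ, μ[B.indicator (fun _ => (1 : ℝ)) | m] ω ≤ p) {l : ℝ} (hl : 0 ≤ l) :
    ∫ ω, f ω * Real.exp (l * B.indicator (fun _ => (1 : ℝ)) ω) ∂μ ≤
      (1 - p + p * Real.exp l) * ∫ ω, f ω ∂μ := by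
  have hmain := integral_mul_indicator_le_of_condExp_le hm hf hf_nonneg hf_int hB hB_cond
  have hel : 0 ≤ Real.exp l - 1 := by linarith [Real.one_le_exp hl]
  simp_rw [Real.exp_mul_indicator_one, mul_add, mul_one, mul_left_comm (f _)]
  rw [integral_add hf_int ((hf_int.mul_indicator_one hB).const_mul _), integral_const_mul]
  nlinarith [mul_le_mul_of_nonneg_left hmain hel]

end OneStep

section PartialSums

variable {Ω : Type*} {m : MeasurableSpace Ω} {A : ℕ → Set Ω} {n : ℕ}

lemma measurable_sum_indicator_Icc (hA : ∀ t, 1 ≤ t → t ≤ n → MeasurableSet[m] (A t)) :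
    Measurable[m] fun ω => ∑ t ∈ Icc 1 n, (A t).indicator (fun _ => (1 : ℝ)) ω := by
  refine Finset.measurable_sum _ fun t ht => ?_
  rw [mem_Icc] at ht
  exact measurable_const.indicator (hA t ht.1 ht.2)

lemma sum_indicator_Icc_le (ω : Ω) :
    ∑ t ∈ Icc 1 n, (A t).indicator (fun _ => (1 : ℝ)) ω ≤ n := by
  simpa using sum_le_card_nsmul (Icc 1 n) (fun t => (A t).indicator (fun _ => (1 : ℝ)) ω) 1
    fun t _ => Set.indicator_le_self' (fun _ _ => zero_le_one) ω

lemma integrable_exp_mul_sum_indicator_Icc {μ : Measure Ω} [IsFiniteMeasure μ]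
    (hA : ∀ t, 1 ≤ t → t ≤ n → MeasurableSet (A t)) {l : ℝ} (hl : 0 ≤ l) :
    Integrable (fun ω => Real.exp (l * ∑ t ∈ Icc 1 n, (A t).indicator (fun _ => (1 : ℝ)) ω)) μ := by
  refine .of_bound ((measurable_sum_indicator_Icc hA).const_mul l).exp.aestronglyMeasurable
    (Real.exp (l * n)) (.of_forall fun ω => ?_)
  rw [Real.norm_of_nonneg (Real.exp_pos _).le]
  exact Real.exp_le_exp.2 (mul_le_mul_of_nonneg_left (sum_indicator_Icc_le ω) hl)

end PartialSums

theorem mgf_bad_rounds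
    {Ω : Type*} [m0 : MeasurableSpace Ω] (P : Measure Ω) [IsProbabilityMeasure P]
    (n : ℕ) (ℱ : Filtration ℕ m0) (A : ℕ → Set Ω)
    (hA : ∀ t, 1 ≤ t → t ≤ n → MeasurableSet[ℱ t] (A t))
    (p0 : ℝ) (hp0 : p0 ∈ Set.Icc (0 : ℝ) 1)
    (hcond : ∀ t, 1 ≤ t → t ≤ n →
      ∀ᵐ ω ∂P, (MeasureTheory.condExp (ℱ (t - 1)) P
        ((A t).indicator (fun _ => (1 : ℝ)))) ω ≤ p0)
    (l : ℝ) (hl : 0 ≤ l) :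
    ∫ ω, Real.exp (l * ∑ t ∈ Finset.Icc 1 n, (A t).indicator (fun _ => (1 : ℝ)) ω) ∂P ≤
      (1 - p0 + p0 * Real.exp l) ^ n := by
  induction n with
  | zero => simp
  | succ k ih =>
    have hA_k : ∀ t, 1 ≤ t → t ≤ k → MeasurableSet[ℱ t] (A t) :=
      fun t h1 h2 => hA t h1 (h2.trans k.le_succ)
    have hS := measurable_sum_indicator_Icc fun t h1 h2 => ℱ.mono h2 _ (hA_k t h1 h2)
    have hf_int := integrable_exp_mul_sum_indicator_Icc (μ := P)
      (fun t h1 h2 => ℱ.le t _ (hA_k t h1 h2)) hl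
    have hstep := integral_mul_exp_mul_indicator_le (ℱ.le k)
      (hS.const_mul l).exp.stronglyMeasurable (fun ω => (Real.exp_pos _).le) hf_int
      (ℱ.le _ _ (hA (k + 1) (Nat.le_add_left 1 k) le_rfl))
      (by simpa using hcond (k + 1) (Nat.le_add_left 1 k) le_rfl) hl
    have hc : 0 ≤ 1 - p0 + p0 * Real.exp l := by nlinarith [hp0.1, Real.one_le_exp hl]
    simp_rw [sum_Icc_succ_top (Nat.le_add_left 1 k), mul_add, Real.exp_add]
    refine hstep.trans ?_
    rw [pow_succ']
    exact mul_le_mul_of_nonneg_left (ih hA_k fun t h1 h2 => hcond t h1 (h2.trans k.le_succ)) hc
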